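/- arXiv:1010.3875 — 3 statements merged into one kernel-verified Lean document; each statement's English description precedes it below -/
import Mathlib

section
/- Let $d \ge 1$ be an integer, $\alpha > d$ and $\nu > 0$, and set $a_1 = \nu\,\omega_d\,\Gamma\bigl(\tfrac{\alpha-d}{\alpha}\bigr)$. Then as $t \to \infty$, $\bigl| \nu \int_{\mathbb{R}^d} \bigl(1 - e^{-t\,\hat v(y)}\bigr)\,\mathrm{d}y - a_1\, t^{d/\alpha} \bigr| = O(e^{-t})$. -/
open MeasureTheory Real Filter Asymptotics
open scoped Classical

/-- The shape function `v̂(y) = min(|y|^{-α}, 1)`, with `v̂(0) = 1`. -/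
noncomputable def hatv (d : ℕ) (α : ℝ) (y : EuclideanSpace ℝ (Fin d)) : ℝ :=
  if y = 0 then 1 else min (‖y‖ ^ (-α)) 1

/-!
By the layer-cake formula, `∫ (1 - e^{-t ‖y‖^{-α}}) dy = ∫₀^∞ e^{-u} |{y : t ‖y‖^{-α} > u}| du`,
and the superlevel set is the ball of radius `(t/u)^{1/α}`, of volume `ω_d t^{d/α} u^{-d/α}`;
the remaining integral is `Γ(1 - d/α)`. Replacing `‖y‖^{-α}` by `v̂(y) = min(‖y‖^{-α}, 1)` only
changes the integrand on the unit ball, and there by at most `e^{-t}`.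
-/

open Set Metric Module

lemma integral_exp_neg_from_zero (x : ℝ) : ∫ u in (0 : ℝ)..x, exp (-u) = 1 - exp (-x) := by
  rw [intervalIntegral.integral_comp_neg (fun u => exp u), integral_exp, neg_zero, exp_zero]

lemma setOf_lt_mul_norm_rpow_neg {E : Type*} [NormedAddCommGroup E] {α t u : ℝ} (hα : 0 < α)
    (ht : 0 < t) (hu : 0 < u) :
    {y : E | u < t * ‖y‖ ^ (-α)} = ball 0 ((t / u) ^ α⁻¹) \ {0} := by
  ext y
  simp only [mem_ofPred_eq, Set.mem_sdiff, mem_ball, dist_zero_right, mem_singleton_iff]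
  rcases eq_or_ne y 0 with rfl | hy
  · simp [zero_rpow (neg_ne_zero.2 hα.ne'), hu.le]
  have hy' : 0 < ‖y‖ := norm_pos_iff.2 hy
  rw [rpow_neg hy'.le, ← div_eq_mul_inv, lt_div_iff₀ (rpow_pos_of_pos hy' α), mul_comm,
    ← lt_div_iff₀ hu, ← lt_rpow_inv_iff_of_pos hy'.le (div_nonneg ht.le hu.le) hα]
  exact (and_iff_left hy).symm

lemma one_sub_exp_neg_nonneg {x : ℝ} (hx : 0 ≤ x) : 0 ≤ 1 - exp (-x) :=
  sub_nonneg.2 (exp_le_one_iff.2 (neg_nonpos.2 hx))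

section RadialPower

variable {E : Type*} [NormedAddCommGroup E] [NormedSpace ℝ E] [FiniteDimensional ℝ E]
  [MeasurableSpace E] [BorelSpace E] (μ : Measure E) [μ.IsAddHaarMeasure] [Nontrivial E]

lemma measure_setOf_lt_mul_norm_rpow_neg {α t u : ℝ} (hα : 0 < α) (ht : 0 < t) (hu : 0 < u) :
    μ {y : E | u < t * ‖y‖ ^ (-α)} =
      ENNReal.ofReal (t ^ ((finrank ℝ E : ℝ) / α) * u ^ (-(finrank ℝ E : ℝ) / α)) *
        μ (ball 0 1) := by
  have htu : 0 ≤ t / u := div_nonneg ht.le hu.le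
  rw [setOf_lt_mul_norm_rpow_neg hα ht hu, measure_sdiff_null (measure_singleton 0),
    Measure.addHaar_ball_of_pos μ 0 (rpow_pos_of_pos (div_pos ht hu) _), ← rpow_natCast,
    ← rpow_mul htu, div_rpow ht.le hu.le, div_eq_mul_inv, ← rpow_neg hu.le]
  congr 4 <;> field_simp

theorem lintegral_one_sub_exp_neg_mul_norm_rpow_neg {α t : ℝ} (hα : (finrank ℝ E : ℝ) < α)
    (ht : 0 < t) :
    ∫⁻ y, ENNReal.ofReal (1 - exp (-(t * ‖y‖ ^ (-α)))) ∂μ =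
      μ (ball 0 1) *
        ENNReal.ofReal (Gamma (1 - finrank ℝ E / α) * t ^ ((finrank ℝ E : ℝ) / α)) := by
  set d : ℝ := (finrank ℝ E : ℝ)
  have hα0 : 0 < α := (Nat.cast_nonneg _).trans_lt hα
  have hs : 0 < 1 - d / α := sub_pos.2 ((div_lt_one hα0).2 hα)
  have hGamma : ∫⁻ u in Ioi (0 : ℝ), ENNReal.ofReal (exp (-u) * u ^ (-d / α)) =
      ENNReal.ofReal (Gamma (1 - d / α)) := by
    rw [Gamma_eq_integral hs, ofReal_integral_eq_lintegral_ofReal (GammaIntegral_convergent hs)]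
    · congr! 4; congr 1; ring
    · filter_upwards [ae_restrict_mem measurableSet_Ioi] with u (hu : 0 < u)
      positivity
  simp_rw [← integral_exp_neg_from_zero]
  rw [lintegral_comp_eq_lintegral_meas_lt_mul μ (ae_of_all _ fun y => by positivity)
    (by fun_prop) (g := fun u => exp (-u))
    (fun _ _ => (by fun_prop : Continuous fun u : ℝ => exp (-u)).intervalIntegrable _ _)
    (ae_of_all _ fun u => (exp_pos _).le)]
  calc ∫⁻ u in Ioi 0, μ {y | u < t * ‖y‖ ^ (-α)} * ENNReal.ofReal (exp (-u))
      = ∫⁻ u in Ioi 0, μ (ball 0 1) * ENNReal.ofReal (t ^ (d / α)) *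
          ENNReal.ofReal (exp (-u) * u ^ (-d / α)) := by
        refine setLIntegral_congr_fun measurableSet_Ioi fun u (hu : 0 < u) => ?_
        rw [measure_setOf_lt_mul_norm_rpow_neg μ hα0 ht hu, ENNReal.ofReal_mul (by positivity),
          ENNReal.ofReal_mul (by positivity)]
        ring
    _ = μ (ball 0 1) * ENNReal.ofReal (Gamma (1 - d / α) * t ^ (d / α)) := by
        rw [lintegral_const_mul' _ _
            (ENNReal.mul_ne_top measure_ball_lt_top.ne ENNReal.ofReal_ne_top), hGamma,
          ENNReal.ofReal_mul (Gamma_pos_of_pos hs).le]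
        ring

theorem integrable_one_sub_exp_neg_mul_norm_rpow_neg {α t : ℝ} (hα : (finrank ℝ E : ℝ) < α)
    (ht : 0 < t) : Integrable (fun y : E => 1 - exp (-(t * ‖y‖ ^ (-α)))) μ := by
  refine ⟨(by fun_prop : Measurable fun y : E => 1 - exp (-(t * ‖y‖ ^ (-α))))
    |>.aestronglyMeasurable, ?_⟩
  rw [hasFiniteIntegral_iff_ofReal
    (ae_of_all _ fun _ => one_sub_exp_neg_nonneg (by positivity)),
    lintegral_one_sub_exp_neg_mul_norm_rpow_neg μ hα ht]
  exact ENNReal.mul_lt_top measure_ball_lt_top ENNReal.ofReal_lt_top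

theorem integral_one_sub_exp_neg_mul_norm_rpow_neg {α t : ℝ} (hα : (finrank ℝ E : ℝ) < α)
    (ht : 0 < t) :
    ∫ y, 1 - exp (-(t * ‖y‖ ^ (-α))) ∂μ =
      μ.real (ball 0 1) * Gamma (1 - finrank ℝ E / α) * t ^ ((finrank ℝ E : ℝ) / α) := by
  have hs : 0 < 1 - finrank ℝ E / α :=
    sub_pos.2 ((div_lt_one ((Nat.cast_nonneg _).trans_lt hα)).2 hα)
  rw [integral_eq_lintegral_of_nonneg_ae
    (ae_of_all _ fun _ => one_sub_exp_neg_nonneg (by positivity))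
    (by fun_prop : Measurable fun y : E => 1 - exp (-(t * ‖y‖ ^ (-α)))).aestronglyMeasurable,
    lintegral_one_sub_exp_neg_mul_norm_rpow_neg μ hα ht, ENNReal.toReal_mul,
    ENNReal.toReal_ofReal (by have := Gamma_pos_of_pos hs; positivity), Measure.real, mul_assoc]

end RadialPower

lemma hatv_of_norm_le_one {d : ℕ} {α : ℝ} (hα : 0 ≤ α) {y : EuclideanSpace ℝ (Fin d)}
    (hy : ‖y‖ ≤ 1) : hatv d α y = 1 := by
  rcases eq_or_ne y 0 with rfl | hy0
  · simp [hatv]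
  · rw [hatv, if_neg hy0, min_eq_right
      (one_le_rpow_of_pos_of_le_one_of_nonpos (norm_pos_iff.2 hy0) hy (neg_nonpos.2 hα))]

lemma hatv_of_one_le_norm {d : ℕ} {α : ℝ} (hα : 0 ≤ α) {y : EuclideanSpace ℝ (Fin d)}
    (hy : 1 ≤ ‖y‖) : hatv d α y = ‖y‖ ^ (-α) := by
  have hy0 : y ≠ 0 := norm_pos_iff.1 (one_pos.trans_le hy)
  rw [hatv, if_neg hy0, min_eq_left (rpow_le_one_of_one_le_of_nonpos hy (neg_nonpos.2 hα))]

lemma measurable_hatv (d : ℕ) (α : ℝ) : Measurable (hatv d α) :=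
  Measurable.ite measurableSet_eq measurable_const (by fun_prop)

lemma norm_exp_neg_mul_hatv_sub_le {d : ℕ} {α t : ℝ} (hα : 0 ≤ α) (ht : 0 ≤ t)
    {y : EuclideanSpace ℝ (Fin d)} (hy : y ≠ 0) :
    ‖(1 - exp (-(t * hatv d α y))) - (1 - exp (-(t * ‖y‖ ^ (-α))))‖ ≤
      (closedBall 0 1).indicator (fun _ => exp (-t)) y := by
  rcases le_or_gt ‖y‖ 1 with hle | hgt
  · have hpow : 1 ≤ ‖y‖ ^ (-α) :=
      one_le_rpow_of_pos_of_le_one_of_nonpos (norm_pos_iff.2 hy) hle (neg_nonpos.2 hα)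
    have hexp : exp (-(t * ‖y‖ ^ (-α))) ≤ exp (-t) := exp_le_exp.2 (by nlinarith)
    rw [indicator_of_mem (mem_closedBall_zero_iff.2 hle), hatv_of_norm_le_one hα hle, mul_one,
      norm_eq_abs, abs_le]
    constructor <;> linarith [exp_pos (-(t * ‖y‖ ^ (-α)))]
  · rw [hatv_of_one_le_norm hα hgt.le, sub_self, norm_zero]
    exact indicator_nonneg (fun _ _ => (exp_pos _).le) y

theorem norm_integral_one_sub_exp_neg_mul_hatv_sub_le {d : ℕ} (hd : 1 ≤ d) {α t : ℝ}
    (hα : (d : ℝ) < α) (ht : 0 < t) :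
    ‖(∫ y, 1 - exp (-(t * hatv d α y))) -
        volume.real (ball (0 : EuclideanSpace ℝ (Fin d)) 1) * Gamma (1 - d / α) *
          t ^ ((d : ℝ) / α)‖
      ≤ volume.real (ball (0 : EuclideanSpace ℝ (Fin d)) 1) * exp (-t) := by
  have : Nontrivial (EuclideanSpace ℝ (Fin d)) :=
    nontrivial_of_finrank_pos (R := ℝ) (by rwa [finrank_euclideanSpace_fin])
  have hα' : (finrank ℝ (EuclideanSpace ℝ (Fin d)) : ℝ) < α := by simpa using hα
  have hα0 : 0 ≤ α := (Nat.cast_nonneg d).trans hα.le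
  set f := fun y : EuclideanSpace ℝ (Fin d) => 1 - exp (-(t * hatv d α y))
  set g := fun y : EuclideanSpace ℝ (Fin d) => 1 - exp (-(t * ‖y‖ ^ (-α)))
  set b := (closedBall (0 : EuclideanSpace ℝ (Fin d)) 1).indicator fun _ => exp (-t)
  have hbound : ∀ᵐ y, ‖f y - g y‖ ≤ b y := by
    filter_upwards [measure_eq_zero_iff_ae_notMem.1 (measure_singleton 0)] with y hy
    exact norm_exp_neg_mul_hatv_sub_le hα0 ht.le hy
  have hb : Integrable b :=
    (integrable_indicator_iff measurableSet_closedBall).2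
      (integrableOn_const measure_closedBall_lt_top.ne)
  have hg : Integrable g := integrable_one_sub_exp_neg_mul_norm_rpow_neg volume hα' ht
  have hfg : Integrable (f - g) :=
    hb.mono' (((measurable_exp.comp ((measurable_hatv d α).const_mul t).neg).const_sub 1).sub
      (by fun_prop : Measurable g)).aestronglyMeasurable hbound
  have hgval : ∫ y, g y = volume.real (ball (0 : EuclideanSpace ℝ (Fin d)) 1) *
      Gamma (1 - d / α) * t ^ ((d : ℝ) / α) := by
    have := integral_one_sub_exp_neg_mul_norm_rpow_neg volume hα' ht
    rwa [finrank_euclideanSpace_fin] at this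
  have hfval : ∫ y, f y = (∫ y, g y) + ∫ y, (f - g) y := by
    rw [← integral_add hg hfg]; simp
  calc ‖(∫ y, f y) - volume.real (ball (0 : EuclideanSpace ℝ (Fin d)) 1) * Gamma (1 - d / α) *
          t ^ ((d : ℝ) / α)‖
      = ‖∫ y, (f - g) y‖ := by rw [hfval, hgval, add_sub_cancel_left]
    _ ≤ ∫ y, b y := norm_integral_le_of_norm_le hb hbound
    _ = volume.real (ball (0 : EuclideanSpace ℝ (Fin d)) 1) * exp (-t) := by
        rw [integral_indicator_const _ measurableSet_closedBall, smul_eq_mul, Measure.real,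
          Measure.real, Measure.addHaar_closedBall_eq_addHaar_ball]

theorem stmt2_general (d : ℕ) (hd : 1 ≤ d) (α ν : ℝ) (hα : (d : ℝ) < α) :
    (fun t : ℝ =>
        ν * (∫ y : EuclideanSpace ℝ (Fin d), (1 - Real.exp (-(t * hatv d α y))))
          - ν * (volume (Metric.ball (0 : EuclideanSpace ℝ (Fin d)) 1)).toReal *
              Real.Gamma ((α - d) / α) * t ^ ((d : ℝ) / α))
      =O[atTop] fun t => Real.exp (-t) := by
  have hα0 : 0 < α := (Nat.cast_nonneg d).trans_lt hα
  have hbound : (fun t : ℝ => (∫ y, 1 - exp (-(t * hatv d α y))) -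
      volume.real (ball (0 : EuclideanSpace ℝ (Fin d)) 1) * Gamma (1 - d / α) * t ^ ((d : ℝ) / α))
      =O[atTop] fun t => exp (-t) := by
    refine IsBigO.of_bound (volume.real (ball (0 : EuclideanSpace ℝ (Fin d)) 1)) ?_
    filter_upwards [eventually_gt_atTop 0] with t ht
    rw [norm_of_nonneg (exp_pos _).le]
    exact norm_integral_one_sub_exp_neg_mul_hatv_sub_le hd hα ht
  refine (hbound.const_mul_left ν).congr_left fun t => ?_
  rw [sub_div, div_self hα0.ne', Measure.real]
  ring

/-- `ν ∫ (1 - e^{-t v̂(y)}) dy = a₁ t^{d/α} + O(e^{-t})` as `t → ∞`, where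
`a₁ = ν ω_d Γ((α-d)/α)`. -/
theorem stmt2 (d : ℕ) (hd : 1 ≤ d) (α ν : ℝ) (hα : (d : ℝ) < α) (hν : 0 < ν) :
    (fun t : ℝ =>
        ν * (∫ y : EuclideanSpace ℝ (Fin d), (1 - Real.exp (-(t * hatv d α y))))
          - ν * (volume (Metric.ball (0 : EuclideanSpace ℝ (Fin d)) 1)).toReal *
              Real.Gamma ((α - d) / α) * t ^ ((d : ℝ) / α))
      =O[atTop] fun t => Real.exp (-t) :=
  stmt2_general d hd α ν hα
end

section
/- Let $d \ge 1$ be an integer and $\alpha > d$. There exist constants $C > 0$ and $\rho_0 \ge 1$ such that for all $\rho \ge \rho_0$ and all real $\theta$, $\Bigl| \int_{\mathbb{R}^d} \Bigl( e^{\sqrt{-1}\,\theta\,\rho^{\frac{2\alpha-d}{2\alpha}}\hat v(y)} - 1 - \sqrt{-1}\,\theta\,\rho^{\frac{2\alpha-d}{2\alpha}}\hat v(y) + \frac{\theta^2}{2}\,\rho^{\frac{2\alpha-d}{\alpha}}\hat v(y)^2 \Bigr)\, e^{-\rho\,\hat v(y)}\,\mathrm{d}y \Bigr| \;\le\; C\,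 |\theta|^3\, \rho^{-\frac{d}{2\alpha}}$. -/
open MeasureTheory Real Filter
open scoped Classical

/-!
The Taylor bound `‖e^{ix} - 1 - ix + x²/2‖ ≤ |x|³` bounds the integrand by
`|θ|³ (s/ρ)³ (ρv̂)³ e^{-ρv̂}` with `s = ρ^{(2α-d)/(2α)}`. Since `w³e^{-w} ≤ 6` and
`ρ v̂(y) ≤ (ρ^{-1/α}|y|)^{-α}`, the factor `(ρv̂)³ e^{-ρv̂}` is dominated by
`6 (2 / (1 + ρ^{-1/α}|y|))^{3α}`, integrable because `3α > d`. The substitution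
`y = ρ^{1/α} z` contributes `ρ^{d/α}`, and `(s/ρ)³ ρ^{d/α} = ρ^{-d/(2α)}`.
-/

theorem norm_le_abs_pow_succ_of_hasDerivAt {E : Type*} [NormedAddCommGroup E] [NormedSpace ℝ E]
    {f f' : ℝ → E} {n : ℕ} (h₀ : f 0 = 0) (hf : ∀ t, HasDerivAt f (f' t) t)
    (hf' : ∀ t, ‖f' t‖ ≤ |t| ^ n) (x : ℝ) : ‖f x‖ ≤ |x| ^ (n + 1) := by
  have hbound : ∀ t ∈ Set.uIcc 0 x, ‖f' t‖ ≤ |x| ^ n := fun t ht =>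
    (hf' t).trans <| pow_le_pow_left₀ (abs_nonneg t)
      (by simpa using Set.abs_sub_left_of_mem_uIcc ht) n
  have := Convex.norm_image_sub_le_of_norm_hasDerivWithin_le (fun t _ => (hf t).hasDerivWithinAt)
    hbound (convex_uIcc 0 x) Set.left_mem_uIcc Set.right_mem_uIcc
  simpa [h₀, pow_succ] using this

open Complex in
theorem hasDerivAt_cexp_I_mul_ofReal (t : ℝ) :
    HasDerivAt (fun u : ℝ => cexp (I * u)) (I * cexp (I * t)) t := by
  simpa [mul_comm] using (((hasDerivAt_id (t : ℂ)).const_mul I).cexp).comp_ofReal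

open Complex in
theorem norm_cexp_I_mul_ofReal_sub_one_sub_le (x : ℝ) :
    ‖cexp (I * x) - 1 - I * x‖ ≤ |x| ^ 2 := by
  refine norm_le_abs_pow_succ_of_hasDerivAt (n := 1) (f := fun u : ℝ => cexp (I * u) - 1 - I * u)
    (f' := fun t => I * (cexp (I * t) - 1))
    ?_ (fun t => ?_) (fun t => ?_) x
  · simp
  · convert ((hasDerivAt_cexp_I_mul_ofReal t).sub_const 1).sub
      ((hasDerivAt_id t).ofReal_comp.const_mul I) using 1
    · rfl
    · simp [mul_sub]
  · simpa using Real.norm_exp_I_mul_ofReal_sub_one_le (x := t)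

open Complex in
theorem norm_cexp_I_mul_ofReal_sub_taylor_two_le (x : ℝ) :
    ‖cexp (I * x) - 1 - I * x + (x : ℂ) ^ 2 / 2‖ ≤ |x| ^ 3 := by
  refine norm_le_abs_pow_succ_of_hasDerivAt (n := 2)
    (f := fun u : ℝ => cexp (I * u) - 1 - I * u + (u : ℂ) ^ 2 / 2)
    (f' := fun t => I * (cexp (I * t) - 1 - I * t))
    ?_ (fun t => ?_) (fun t => ?_) x
  · simp
  · convert (((hasDerivAt_cexp_I_mul_ofReal t).sub_const 1).sub
      ((hasDerivAt_id t).ofReal_comp.const_mul I)).add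
      (((hasDerivAt_pow 2 (t : ℂ)).div_const 2).comp_ofReal) using 1
    · rfl
    · push_cast
      linear_combination (-(t : ℂ)) * I_sq
  · simpa using norm_cexp_I_mul_ofReal_sub_one_sub_le t

open Complex in
theorem norm_taylor_two_remainder_mul_cexp_neg_le (θ : ℝ) {s ρ v : ℝ} (hs : 0 ≤ s) (hρ : 0 < ρ)
    (hv : 0 ≤ v) :
    ‖(cexp (I * θ * ((s * v : ℝ) : ℂ)) - 1 - I * θ * ((s * v : ℝ) : ℂ) +
        ((θ ^ 2 / 2 * (s ^ 2 * v ^ 2) : ℝ) : ℂ)) * cexp (-((ρ * v : ℝ) : ℂ))‖ ≤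
      |θ| ^ 3 * (s / ρ) ^ 3 * ((ρ * v) ^ 3 * Real.exp (-(ρ * v))) := by
  have hx : I * θ * ((s * v : ℝ) : ℂ) = I * ((θ * (s * v) : ℝ) : ℂ) := by push_cast; ring
  have hx2 : ((θ ^ 2 / 2 * (s ^ 2 * v ^ 2) : ℝ) : ℂ) = ((θ * (s * v) : ℝ) : ℂ) ^ 2 / 2 := by
    push_cast; ring
  rw [norm_mul, hx, hx2, norm_exp, ← ofReal_neg, ofReal_re]
  calc _ ≤ |θ * (s * v)| ^ 3 * Real.exp (-(ρ * v)) := by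
        gcongr
        exact norm_cexp_I_mul_ofReal_sub_taylor_two_le _
    _ = _ := by
        rw [abs_mul, abs_of_nonneg (mul_nonneg hs hv)]
        field_simp

theorem pow_three_mul_exp_neg_le_six {w : ℝ} (hw : 0 ≤ w) : w ^ 3 * exp (-w) ≤ 6 := by
  have h := pow_div_factorial_le_exp w hw 3
  rw [exp_neg, ← div_eq_mul_inv, div_le_iff₀ (exp_pos w)]
  norm_num [Nat.factorial] at h
  linarith

theorem pow_three_mul_exp_neg_le_of_le_rpow_neg {w t r : ℝ} (hr : 0 ≤ r) (hw : 0 ≤ w)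
    (ht : 0 ≤ t) (hwt : 1 < t → w ≤ t ^ (-r)) :
    w ^ 3 * exp (-w) ≤ 6 * (2 / (1 + t)) ^ (3 * r) := by
  rcases le_or_gt t 1 with ht1 | ht1
  · have : 1 ≤ (2 / (1 + t)) ^ (3 * r) :=
      one_le_rpow ((one_le_div (by positivity)).2 (by linarith)) (by positivity)
    nlinarith [pow_three_mul_exp_neg_le_six hw]
  · calc w ^ 3 * exp (-w) ≤ (t ^ (-r)) ^ 3 * 1 := by
          gcongr
          · exact hwt ht1
          · exact exp_le_one_iff.2 (by linarith)
      _ = t⁻¹ ^ (3 * r) := by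
          rw [mul_one, ← rpow_natCast, ← rpow_mul ht, inv_rpow ht, ← rpow_neg ht]
          ring_nf
      _ ≤ (2 / (1 + t)) ^ (3 * r) := by
          gcongr
          rw [inv_eq_one_div, div_le_div_iff₀ (by linarith) (by linarith)]
          linarith
      _ ≤ 6 * (2 / (1 + t)) ^ (3 * r) := by
          have : 0 ≤ (2 / (1 + t)) ^ (3 * r) := by positivity
          linarith

theorem integrable_two_div_one_add_norm_rpow {E : Type*} [NormedAddCommGroup E]
    [NormedSpace ℝ E] [FiniteDimensional ℝ E] [MeasurableSpace E] [BorelSpace E]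
    (μ : Measure E) [μ.IsAddHaarMeasure] {r : ℝ} (hr : (Module.finrank ℝ E : ℝ) < r) :
    Integrable (fun x : E => (2 / (1 + ‖x‖)) ^ r) μ := by
  refine ((integrable_one_add_norm hr).const_mul (2 ^ r)).congr (ae_of_all _ fun x => ?_)
  dsimp only
  rw [div_rpow zero_le_two (by positivity), rpow_neg (by positivity), div_eq_mul_inv]

theorem rpow_div_eq_rpow_div_two_mul_sq {ρ : ℝ} (hρ : 0 ≤ ρ) (a b : ℝ) :
    ρ ^ (a / b) = (ρ ^ (a / (2 * b))) ^ 2 := by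
  rw [← rpow_natCast, ← rpow_mul hρ]
  congr 1
  push_cast
  ring

theorem rpow_div_self_pow_three_mul_rpow_inv_pow {ρ α : ℝ} (hρ : 0 < ρ) (hα : α ≠ 0) (d : ℕ) :
    (ρ ^ ((2 * α - d) / (2 * α)) / ρ) ^ 3 * (ρ ^ α⁻¹) ^ d = ρ ^ (-(d : ℝ) / (2 * α)) := by
  rw [← rpow_sub_one hρ.ne', ← rpow_natCast, ← rpow_natCast, ← rpow_mul hρ.le,
    ← rpow_mul hρ.le, ← rpow_add hρ]
  congr 1
  field_simp
  push_cast
  ring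

section hatv

variable {d : ℕ} {α : ℝ}

theorem hatv_nonneg (y : EuclideanSpace ℝ (Fin d)) : 0 ≤ hatv d α y := by
  unfold hatv
  split_ifs
  exacts [zero_le_one, le_min (rpow_nonneg (norm_nonneg y) _) zero_le_one]

theorem hatv_le_rpow_neg {y : EuclideanSpace ℝ (Fin d)} (hy : y ≠ 0) :
    hatv d α y ≤ ‖y‖ ^ (-α) := by
  rw [hatv, if_neg hy]
  exact min_le_left _ _

theorem mul_hatv_le_norm_inv_smul_rpow_neg {ρ : ℝ} (hρ : 0 < ρ) (hα : α ≠ 0)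
    {y : EuclideanSpace ℝ (Fin d)} (hy : y ≠ 0) :
    ρ * hatv d α y ≤ ‖(ρ ^ α⁻¹)⁻¹ • y‖ ^ (-α) := by
  have hR : 0 ≤ (ρ ^ α⁻¹)⁻¹ := by positivity
  rw [norm_smul, norm_of_nonneg hR, mul_rpow hR (norm_nonneg y), inv_rpow (by positivity),
    rpow_neg (by positivity), inv_inv, rpow_inv_rpow hρ.le hα]
  exact mul_le_mul_of_nonneg_left (hatv_le_rpow_neg hy) hρ.le

theorem hatv_cube_mul_exp_neg_le (hα : 0 < α) {ρ : ℝ} (hρ : 0 < ρ)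
    (y : EuclideanSpace ℝ (Fin d)) :
    (ρ * hatv d α y) ^ 3 * exp (-(ρ * hatv d α y)) ≤
      6 * (2 / (1 + ‖(ρ ^ α⁻¹)⁻¹ • y‖)) ^ (3 * α) := by
  refine pow_three_mul_exp_neg_le_of_le_rpow_neg hα.le
    (mul_nonneg hρ.le (hatv_nonneg y)) (norm_nonneg _) fun h => ?_
  have hy : y ≠ 0 := by
    rintro rfl
    norm_num at h
  exact mul_hatv_le_norm_inv_smul_rpow_neg hρ hα.ne' hy

end hatv

theorem stmt12_general (d : ℕ) (α : ℝ) (hα : (d : ℝ) < α) :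
    ∃ C > (0 : ℝ), ∃ ρ₀ : ℝ, 1 ≤ ρ₀ ∧ ∀ ρ ≥ ρ₀, ∀ θ : ℝ,
      ‖∫ y : EuclideanSpace ℝ (Fin d),
          (Complex.exp (Complex.I * (θ : ℂ) *
              ((ρ ^ ((2 * α - d) / (2 * α)) * hatv d α y : ℝ) : ℂ)) - 1 -
            Complex.I * (θ : ℂ) * ((ρ ^ ((2 * α - d) / (2 * α)) * hatv d α y : ℝ) : ℂ) +
            ((θ ^ 2 / 2 * (ρ ^ ((2 * α - d) / α) * hatv d α y ^ 2) : ℝ) : ℂ)) *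
            Complex.exp (-((ρ * hatv d α y : ℝ) : ℂ))‖
        ≤ C * |θ| ^ 3 * ρ ^ (-(d : ℝ) / (2 * α)) := by
  have hα₀ : 0 < α := (Nat.cast_nonneg d).trans_lt hα
  set J := ∫ z : EuclideanSpace ℝ (Fin d), (2 / (1 + ‖z‖)) ^ (3 * α)
  have hJ : 0 ≤ J := integral_nonneg fun z => by positivity
  refine ⟨6 * J + 1, by positivity, 1, le_rfl, fun ρ hρ θ => ?_⟩
  have hρ₀ : 0 < ρ := one_pos.trans_le hρ
  set s := ρ ^ ((2 * α - d) / (2 * α))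
  set R := ρ ^ α⁻¹
  have hs₀ : 0 ≤ s := by positivity
  have hR₀ : 0 < R := by positivity
  have hint : Integrable (fun y : EuclideanSpace ℝ (Fin d) =>
      |θ| ^ 3 * (s / ρ) ^ 3 * (6 * (2 / (1 + ‖R⁻¹ • y‖)) ^ (3 * α))) := by
    refine (((integrable_two_div_one_add_norm_rpow volume ?_).comp_smul
      (inv_ne_zero hR₀.ne')).const_mul 6).const_mul _
    rw [finrank_euclideanSpace_fin]
    linarith
  rw [rpow_div_eq_rpow_div_two_mul_sq hρ₀.le]
  calc _ ≤ ∫ y : EuclideanSpace ℝ (Fin d),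
        |θ| ^ 3 * (s / ρ) ^ 3 * (6 * (2 / (1 + ‖R⁻¹ • y‖)) ^ (3 * α)) := by
        refine norm_integral_le_of_norm_le hint (ae_of_all _ fun y => ?_)
        refine (norm_taylor_two_remainder_mul_cexp_neg_le θ hs₀ hρ₀ (hatv_nonneg y)).trans ?_
        exact mul_le_mul_of_nonneg_left (hatv_cube_mul_exp_neg_le hα₀ hρ₀ y) (by positivity)
    _ = 6 * J * |θ| ^ 3 * ((s / ρ) ^ 3 * R ^ d) := by
        rw [integral_const_mul, integral_const_mul,
          Measure.integral_comp_inv_smul_of_nonneg volume (fun z => (2 / (1 + ‖z‖)) ^ (3 * α))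
            hR₀.le, finrank_euclideanSpace_fin, smul_eq_mul]
        ring
    _ ≤ (6 * J + 1) * |θ| ^ 3 * ρ ^ (-(d : ℝ) / (2 * α)) := by
        rw [rpow_div_self_pow_three_mul_rpow_inv_pow hρ₀ hα₀.ne']
        gcongr
        linarith

/-- Third-order bound for the characteristic-function integral: for large `ρ` and all `θ`,
the integral of the third-order Taylor remainder is bounded by `C|θ|³ρ^{-d/(2α)}`. -/
theorem stmt12 (d : ℕ) (hd : 1 ≤ d) (α : ℝ) (hα : (d : ℝ) < α) :
    ∃ C > (0 : ℝ), ∃ ρ₀ : ℝ, 1 ≤ ρ₀ ∧ ∀ ρ ≥ ρ₀, ∀ θ : ℝ,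
      ‖∫ y : EuclideanSpace ℝ (Fin d),
          (Complex.exp (Complex.I * (θ : ℂ) *
              ((ρ ^ ((2 * α - d) / (2 * α)) * hatv d α y : ℝ) : ℂ)) - 1 -
            Complex.I * (θ : ℂ) * ((ρ ^ ((2 * α - d) / (2 * α)) * hatv d α y : ℝ) : ℂ) +
            ((θ ^ 2 / 2 * (ρ ^ ((2 * α - d) / α) * hatv d α y ^ 2) : ℝ) : ℂ)) *
            Complex.exp (-((ρ * hatv d α y : ℝ) : ℂ))‖
        ≤ C * |θ| ^ 3 * ρ ^ (-(d : ℝ) / (2 * α)) :=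
  stmt12_general d α hα
end

section
/- Let $\alpha > 1$ and consider dimension $d = 1$. For every $\epsilon \in (0, 1]$ there exists $\rho_0 \ge 1$ such that for all $\rho \ge \rho_0$ and all real $\theta$ with $|\theta| \ge \epsilon\, \rho^{1/(2\alpha)}$, $\int_{\mathbb{R}} \bigl( 1 - \cos\bigl(\theta\, \rho^{\frac{2\alpha-1}{2\alpha}}\, \hat v(y)\bigr) \bigr)\, e^{-\rho\,\hat v(y)}\,\mathrm{d}y \;\ge\; \bigl(1 - \cos 2^{-\alpha}\bigr)\, e^{-\epsilon^{-\alpha}}\, \rho^{\frac{2\alpha-1}{2\alpha^2}}\, |\theta|^{1/\alpha}$. -/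
/-!
Put `a = θ ρ^{(2α-1)/(2α)}` and `A = |a|^{1/α}`, so that `A = ρ^{(2α-1)/(2α²)} |θ|^{1/α}`.
On the window `y ∈ [A, 2A]` we have `v̂(y) = y^{-α}`, hence the phase `|a| v̂(y) = (A/y)^α` lies in
`[2^{-α}, 1] ⊆ [0, π]` and `1 - cos(a v̂(y)) ≥ 1 - cos 2^{-α}`, while the damping exponent satisfies
`ρ v̂(y) ≤ ρ/|a| ≤ 1/ε ≤ ε^{-α}` because `|a| ≥ ερ`. The integrand is nonnegative and integrable
(`1 - cos x ≤ x²/2` and `v̂_α² = v̂_{2α}`), so the integral is at least its integral over the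
window, which has length `A`.
-/

open MeasureTheory Real Filter

noncomputable def hatv1 (α : ℝ) (y : ℝ) : ℝ :=
  if y = 0 then 1 else min (|y| ^ (-α)) 1

open Set

section

variable {α : ℝ}

lemma hatv1_eq_max_rpow (hα : 0 ≤ α) (y : ℝ) : hatv1 α y = max |y| 1 ^ (-α) := by
  unfold hatv1
  split_ifs with hy
  · simp [hy]
  · rcases le_total |y| 1 with h | h
    · rw [max_eq_right h, one_rpow, min_eq_right]
      exact one_le_rpow_of_pos_of_le_one_of_nonpos (abs_pos.mpr hy) h (neg_nonpos.mpr hα)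
    · rw [max_eq_left h, min_eq_left (rpow_le_one_of_one_le_of_nonpos h (neg_nonpos.mpr hα))]

lemma hatv1_nonneg (hα : 0 ≤ α) (y : ℝ) : 0 ≤ hatv1 α y := by
  rw [hatv1_eq_max_rpow hα]
  exact rpow_nonneg (le_max_of_le_right zero_le_one) _

lemma hatv1_of_one_le (hα : 0 ≤ α) {y : ℝ} (hy : 1 ≤ y) : hatv1 α y = y ^ (-α) := by
  rw [hatv1_eq_max_rpow hα, abs_of_nonneg (zero_le_one.trans hy), max_eq_left hy]

lemma continuous_hatv1 (hα : 0 ≤ α) : Continuous (hatv1 α) := by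
  simp_rw [funext (hatv1_eq_max_rpow hα)]
  exact (continuous_abs.max continuous_const).rpow_const
    fun y ↦ Or.inl (zero_lt_one.trans_le (le_max_right _ _)).ne'

lemma hatv1_sq (hα : 0 ≤ α) (y : ℝ) : hatv1 α y ^ 2 = hatv1 (2 * α) y := by
  have hm : 0 ≤ max |y| 1 := le_max_of_le_right zero_le_one
  rw [hatv1_eq_max_rpow hα, hatv1_eq_max_rpow (by linarith), ← rpow_mul_natCast hm]
  ring_nf

lemma hatv1_le_two_rpow_mul_one_add_abs_rpow (hα : 0 ≤ α) (y : ℝ) :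
    hatv1 α y ≤ 2 ^ α * (1 + |y|) ^ (-α) := by
  have h : 1 + |y| ≤ 2 * max |y| 1 := by
    linarith [le_max_left |y| 1, le_max_right |y| 1]
  have hm : 0 < max |y| 1 := zero_lt_one.trans_le (le_max_right _ _)
  calc hatv1 α y = 2 ^ α * (2 * max |y| 1) ^ (-α) := by
        rw [hatv1_eq_max_rpow hα, mul_rpow two_pos.le hm.le, rpow_neg two_pos.le, ← mul_assoc,
          mul_inv_cancel₀ (rpow_pos_of_pos two_pos α).ne', one_mul]
    _ ≤ 2 ^ α * (1 + |y|) ^ (-α) :=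
        mul_le_mul_of_nonneg_left (rpow_le_rpow_of_nonpos (by positivity) h (neg_nonpos.mpr hα))
          (by positivity)

lemma integrable_hatv1 (hα : 1 < α) : Integrable (hatv1 α) := by
  have hbound := integrable_one_add_norm (E := ℝ) (μ := volume) (r := α) (by simpa)
  refine (hbound.const_mul (2 ^ α)).mono'
    (continuous_hatv1 (by linarith)).aestronglyMeasurable (ae_of_all _ fun y ↦ ?_)
  rw [norm_of_nonneg (hatv1_nonneg (by linarith) y)]
  exact hatv1_le_two_rpow_mul_one_add_abs_rpow (by linarith) y

lemma integrable_one_sub_cos_mul_exp_neg (hα : 1 / 2 < α) (a : ℝ) {ρ : ℝ} (hρ : 0 ≤ ρ) :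
    Integrable fun y ↦ (1 - cos (a * hatv1 α y)) * exp (-(ρ * hatv1 α y)) := by
  have hα0 : 0 ≤ α := by linarith
  have hcont := continuous_hatv1 hα0
  refine ((integrable_hatv1 (α := 2 * α) (by linarith)).const_mul (a ^ 2 / 2)).mono'
    (by fun_prop : Continuous _).aestronglyMeasurable (ae_of_all _ fun y ↦ ?_)
  have hcos : 0 ≤ 1 - cos (a * hatv1 α y) := sub_nonneg.mpr (cos_le_one _)
  have hexp : exp (-(ρ * hatv1 α y)) ≤ 1 :=
    exp_le_one_iff.mpr (neg_nonpos.mpr (mul_nonneg hρ (hatv1_nonneg hα0 y)))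
  rw [norm_of_nonneg (mul_nonneg hcos (exp_pos _).le), ← hatv1_sq hα0]
  calc (1 - cos (a * hatv1 α y)) * exp (-(ρ * hatv1 α y)) ≤ (a * hatv1 α y) ^ 2 / 2 * 1 :=
        mul_le_mul (by linarith [one_sub_sq_div_two_le_cos (x := a * hatv1 α y)]) hexp
          (exp_pos _).le (by positivity)
    _ = a ^ 2 / 2 * hatv1 α y ^ 2 := by ring

lemma two_rpow_neg_le_rpow_mul_hatv1 (hα : 0 ≤ α) {A y : ℝ} (hA : 1 ≤ A)
    (hy : y ∈ Icc A (2 * A)) : 2 ^ (-α) ≤ A ^ α * hatv1 α y ∧ A ^ α * hatv1 α y ≤ 1 := by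
  have hA0 : 0 < A := by linarith
  have hy0 : 0 < y := by linarith [hy.1]
  have hratio : A ^ α * hatv1 α y = (A / y) ^ α := by
    rw [hatv1_of_one_le hα (hA.trans hy.1), div_rpow hA0.le hy0.le, rpow_neg hy0.le, div_eq_mul_inv]
  rw [hratio, rpow_neg two_pos.le, ← inv_rpow two_pos.le]
  constructor
  · exact rpow_le_rpow (by norm_num) (by rw [le_div_iff₀ hy0]; linarith [hy.2]) hα
  · exact rpow_le_one (by positivity) ((div_le_one hy0).mpr hy.1) hα

theorem integral_one_sub_cos_mul_exp_neg_ge (hα : 1 / 2 < α) {a ρ : ℝ} (ha : 1 ≤ |a|)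
    (hρ : 0 ≤ ρ) :
    (1 - cos (2 ^ (-α))) * exp (-(ρ / |a|)) * |a| ^ (1 / α) ≤
      ∫ y, (1 - cos (a * hatv1 α y)) * exp (-(ρ * hatv1 α y)) := by
  have hα0 : 0 < α := by linarith
  set A := |a| ^ (1 / α) with hA
  have hA1 : 1 ≤ A := one_le_rpow ha (by positivity)
  have hAα : A ^ α = |a| := by
    rw [hA, ← rpow_mul (abs_nonneg a), one_div_mul_cancel hα0.ne', rpow_one]
  have hint := integrable_one_sub_cos_mul_exp_neg hα a hρ
  have hwindow : ∀ y ∈ Icc A (2 * A), (1 - cos (2 ^ (-α))) * exp (-(ρ / |a|)) ≤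
      (1 - cos (a * hatv1 α y)) * exp (-(ρ * hatv1 α y)) := by
    intro y hy
    obtain ⟨hlo, hhi⟩ := two_rpow_neg_le_rpow_mul_hatv1 hα0.le hA1 hy
    rw [hAα] at hlo hhi
    have hv := hatv1_nonneg hα0.le y
    have hcos : cos (a * hatv1 α y) ≤ cos (2 ^ (-α)) := by
      rw [← cos_abs, abs_mul, abs_of_nonneg hv]
      exact cos_le_cos_of_nonneg_of_le_pi (by positivity)
        (hhi.trans (by linarith [pi_gt_three])) hlo
    have hexp : ρ * hatv1 α y ≤ ρ / |a| := by
      rw [le_div_iff₀ (by linarith)]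
      nlinarith
    exact mul_le_mul (by linarith) (exp_le_exp.mpr (by linarith)) (exp_pos _).le
      (sub_nonneg.mpr (cos_le_one _))
  have hvol : volume.real (Icc A (2 * A)) = A := by
    rw [Real.volume_real_Icc_of_le (by linarith)]; ring
  calc (1 - cos (2 ^ (-α))) * exp (-(ρ / |a|)) * A
      ≤ ∫ y in Icc A (2 * A), (1 - cos (a * hatv1 α y)) * exp (-(ρ * hatv1 α y)) := by
        simpa [hvol] using setIntegral_ge_of_const_le_real measurableSet_Icc
          measure_Icc_lt_top.ne hwindow hint.integrableOn
    _ ≤ ∫ y, (1 - cos (a * hatv1 α y)) * exp (-(ρ * hatv1 α y)) :=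
        setIntegral_le_integral hint (ae_of_all _ fun y ↦
          mul_nonneg (sub_nonneg.mpr (cos_le_one _)) (exp_pos _).le)

end

/-- Tail lower bound: for `|θ| ≥ ε ρ^{1/(2α)}` and `ρ` large,
`∫ (1 - cos(θ ρ^{(2α-1)/(2α)} v̂(y))) e^{-ρ v̂(y)} dy
  ≥ (1 - cos 2^{-α}) e^{-ε^{-α}} ρ^{(2α-1)/(2α²)} |θ|^{1/α}`. -/
theorem stmt14 (α : ℝ) (hα : 1 < α) (ε : ℝ) (hε₀ : 0 < ε) (hε₁ : ε ≤ 1) :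
    ∃ ρ₀ : ℝ, 1 ≤ ρ₀ ∧ ∀ ρ ≥ ρ₀, ∀ θ : ℝ,
      ε * ρ ^ (1 / (2 * α)) ≤ |θ| →
      (∫ y : ℝ, (1 - Real.cos (θ * (ρ ^ ((2 * α - 1) / (2 * α)) * hatv1 α y))) *
          Real.exp (-(ρ * hatv1 α y)))
        ≥ (1 - Real.cos ((2 : ℝ) ^ (-α))) * Real.exp (-(ε ^ (-α))) *
            ρ ^ ((2 * α - 1) / (2 * α ^ 2)) * |θ| ^ (1 / α) := by
  refine ⟨ε⁻¹, (one_le_inv₀ hε₀).mpr hε₁, fun ρ hρ θ hθ ↦ ?_⟩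
  have hρ0 : 0 < ρ := (inv_pos.mpr hε₀).trans_le hρ
  set a := θ * ρ ^ ((2 * α - 1) / (2 * α))
  have habs : |a| = |θ| * ρ ^ ((2 * α - 1) / (2 * α)) := by
    rw [abs_mul, abs_of_pos (rpow_pos_of_pos hρ0 _)]
  have hερ : ε * ρ ≤ |a| := by
    calc ε * ρ = ε * ρ ^ (1 / (2 * α)) * ρ ^ ((2 * α - 1) / (2 * α)) := by
          have hsum : 1 / (2 * α) + (2 * α - 1) / (2 * α) = 1 := by field_simp; ring
          rw [mul_assoc, ← rpow_add hρ0, hsum, rpow_one]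
      _ ≤ |a| := habs ▸ mul_le_mul_of_nonneg_right hθ (rpow_pos_of_pos hρ0 _).le
  have ha1 : 1 ≤ |a| := ((inv_le_iff_one_le_mul₀' hε₀).mp hρ).trans hερ
  have hdecay : ρ / |a| ≤ ε ^ (-α) := by
    calc ρ / |a| ≤ ε⁻¹ := by
          rw [div_le_iff₀ (by linarith), inv_mul_eq_div, le_div_iff₀ hε₀]; linarith
      _ ≤ ε ^ (-α) := by
          rw [← rpow_neg_one]; exact rpow_le_rpow_of_exponent_ge hε₀ hε₁ (by linarith)
  have hscale : |a| ^ (1 / α) = ρ ^ ((2 * α - 1) / (2 * α ^ 2)) * |θ| ^ (1 / α) := by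
    rw [habs, mul_rpow (abs_nonneg θ) (rpow_pos_of_pos hρ0 _).le, ← rpow_mul hρ0.le, mul_comm]
    congr 2; field_simp
  calc (1 - cos (2 ^ (-α))) * exp (-(ε ^ (-α))) * ρ ^ ((2 * α - 1) / (2 * α ^ 2)) * |θ| ^ (1 / α)
      ≤ (1 - cos (2 ^ (-α))) * exp (-(ρ / |a|)) * |a| ^ (1 / α) := by
        rw [hscale, ← mul_assoc]
        gcongr
        exact sub_nonneg.mpr (cos_le_one _)
    _ ≤ _ := integral_one_sub_cos_mul_exp_neg_ge (by linarith) ha1 hρ0.le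
    _ = _ := by simp_rw [a, mul_assoc]
end
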